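/- (Discrete decay of the switched trajectory) Under the hypotheses of the switching theorem — k_s, k_u ≥ 1, λ_s > λ_u > 0, 0 < λ̄ < (λ_s - λ_u)/2, T ≥ max{ log(2k_u k_s)/(λ_s - λ_u - 2λ̄), log(2k_s²)/(2(λ_s - λ̄)) }, and x : [0,∞) → ℝ³ differentiable satisfying, for every n ∈ ℕ, the stability bound with constants (k_s, λ_s) for the controlled pair of coordinates and the growth bound with constants (k_u, λ_u) for the remaining coordinate on each interval [2nT, (2n+1)T] (coordinates (x₁,x₂) controlled, x₃ drifting) and [(2n+1)T, (2n+2)T] (coordinates (x₁,x₃) controlled, x₂ drifting), as in Theorem 1 — the following discrete-time decay holds: for every n ∈ ℕ, ‖(x(2nT), ẋ(2nT))‖₂ ≤ e^{-2λ̄nT} ‖(x(0), ẋ(0))‖₂. -/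
import Mathlib

/-- Euclidean norm of the stacked position/velocity vector of two coordinates
`(x_i, x_j, ẋ_i, ẋ_j)` of a trajectory `x : ℝ → ℝ³`. -/
noncomputable def pairNorm (x : ℝ → Fin 3 → ℝ) (i j : Fin 3) (t : ℝ) : ℝ :=
  Real.sqrt ((x t i) ^ 2 + (x t j) ^ 2 + (deriv x t i) ^ 2 + (deriv x t j) ^ 2)

/-- Euclidean norm of the stacked position/velocity vector of one coordinate
`(x_i, ẋ_i)` of a trajectory `x : ℝ → ℝ³`. -/
noncomputable def singleNorm (x : ℝ → Fin 3 → ℝ) (i : Fin 3) (t : ℝ) : ℝ :=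
  Real.sqrt ((x t i) ^ 2 + (deriv x t i) ^ 2)

/-- Euclidean norm of the full stacked vector `(x(t), ẋ(t)) ∈ ℝ⁶`. -/
noncomputable def fullNorm (x : ℝ → Fin 3 → ℝ) (t : ℝ) : ℝ :=
  Real.sqrt ((x t 0) ^ 2 + (x t 1) ^ 2 + (x t 2) ^ 2
    + (deriv x t 0) ^ 2 + (deriv x t 1) ^ 2 + (deriv x t 2) ^ 2)

lemma scalar_ineq (ks ku ls lu lb T : ℝ)
    (hks : 1 ≤ ks) (hku : 1 ≤ ku) (hlu : 0 < lu) (hls : lu < ls)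
    (hlb0 : 0 < lb) (hlb : lb < (ls - lu) / 2)
    (hT1 : Real.log (2 * ku * ks) / (ls - lu - 2 * lb) ≤ T)
    (hT2 : Real.log (2 * ks ^ 2) / (2 * (ls - lb)) ≤ T) :
    ks ^ 4 * Real.exp (-(ls * T)) ^ 4
      + 2 * ks ^ 2 * ku ^ 2 * Real.exp (-(ls * T)) ^ 2 * Real.exp (lu * T) ^ 2
      ≤ Real.exp (-(2 * lb * T)) ^ 2 := by
  have hc1 : 0 < ls - lu - 2 * lb := by linarith
  have hc2 : 0 < 2 * (ls - lb) := by linarith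
  have hp1 : (0:ℝ) < 2 * ku * ks := by positivity
  have hp2 : (0:ℝ) < 2 * ks ^ 2 := by positivity
  have h1 : 2 * ku * ks ≤ Real.exp ((ls - lu - 2 * lb) * T) := by
    have hl := (div_le_iff₀ hc1).mp hT1
    calc 2 * ku * ks = Real.exp (Real.log (2 * ku * ks)) := (Real.exp_log hp1).symm
      _ ≤ _ := Real.exp_le_exp.mpr (by linarith)
  have h2 : 2 * ks ^ 2 ≤ Real.exp (2 * (ls - lb) * T) := by
    have hl := (div_le_iff₀ hc2).mp hT2
    calc 2 * ks ^ 2 = Real.exp (Real.log (2 * ks ^ 2)) := (Real.exp_log hp2).symm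
      _ ≤ _ := Real.exp_le_exp.mpr (by linarith)
  have h1sq : (2 * ku * ks) ^ 2 ≤ Real.exp ((ls - lu - 2 * lb) * T) ^ 2 :=
    pow_le_pow_left₀ hp1.le h1 2
  have h2sq : (2 * ks ^ 2) ^ 2 ≤ Real.exp (2 * (ls - lb) * T) ^ 2 :=
    pow_le_pow_left₀ hp2.le h2 2
  have epow : ∀ (a : ℝ) (n : ℕ), Real.exp a ^ n = Real.exp ((n : ℝ) * a) := by
    intro a n; rw [← Real.exp_nat_mul]
  have e1 : Real.exp ((ls - lu - 2 * lb) * T) ^ 2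
      * (Real.exp (-(ls * T)) ^ 2 * Real.exp (lu * T) ^ 2)
      = Real.exp (-(2 * lb * T)) ^ 2 := by
    rw [epow, epow, epow, epow, ← Real.exp_add, ← Real.exp_add]
    norm_num; ring_nf
  have e2 : Real.exp (2 * (ls - lb) * T) ^ 2 * Real.exp (-(ls * T)) ^ 4
      = Real.exp (-(2 * lb * T)) ^ 2 := by
    rw [epow, epow, epow, ← Real.exp_add]
    norm_num; ring_nf
  have k1 : (2 * ku * ks) ^ 2 * (Real.exp (-(ls * T)) ^ 2 * Real.exp (lu * T) ^ 2)
      ≤ Real.exp (-(2 * lb * T)) ^ 2 := by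
    calc (2 * ku * ks) ^ 2 * (Real.exp (-(ls * T)) ^ 2 * Real.exp (lu * T) ^ 2)
        ≤ Real.exp ((ls - lu - 2 * lb) * T) ^ 2
            * (Real.exp (-(ls * T)) ^ 2 * Real.exp (lu * T) ^ 2) :=
          mul_le_mul_of_nonneg_right h1sq (by positivity)
      _ = _ := e1
  have k2 : (2 * ks ^ 2) ^ 2 * Real.exp (-(ls * T)) ^ 4
      ≤ Real.exp (-(2 * lb * T)) ^ 2 := by
    calc (2 * ks ^ 2) ^ 2 * Real.exp (-(ls * T)) ^ 4
        ≤ Real.exp (2 * (ls - lb) * T) ^ 2 * Real.exp (-(ls * T)) ^ 4 :=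
          mul_le_mul_of_nonneg_right h2sq (by positivity)
      _ = _ := e2
  nlinarith [k1, k2, sq_nonneg (Real.exp (-(2 * lb * T)))]

set_option maxHeartbeats 1000000 in
/-- **Discrete decay of the switched trajectory.**  Under the hypotheses of the switching
theorem, the full state contracts over each full switching period:
`‖(x(2nT), ẋ(2nT))‖₂ ≤ e^{-2λ̄nT} ‖(x(0), ẋ(0))‖₂` for every `n ∈ ℕ`. -/
theorem stmt18 (ks ku ls lu lb T : ℝ)
    (hks : 1 ≤ ks) (hku : 1 ≤ ku) (hlu : 0 < lu) (hls : lu < ls)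
    (hlb0 : 0 < lb) (hlb : lb < (ls - lu) / 2)
    (hT : T ≥ max (Real.log (2 * ku * ks) / (ls - lu - 2 * lb))
      (Real.log (2 * ks ^ 2) / (2 * (ls - lb))))
    (x : ℝ → Fin 3 → ℝ) (hx : Differentiable ℝ x)
    (heven : ∀ n : ℕ, ∀ t ∈ Set.Icc ((2 * (n : ℝ)) * T) ((2 * (n : ℝ) + 1) * T),
      pairNorm x 0 1 t
          ≤ ks * Real.exp (-(ls * (t - (2 * (n : ℝ)) * T))) * pairNorm x 0 1 ((2 * (n : ℝ)) * T) ∧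
      singleNorm x 2 t
          ≤ ku * Real.exp (lu * (t - (2 * (n : ℝ)) * T)) * singleNorm x 2 ((2 * (n : ℝ)) * T))
    (hodd : ∀ n : ℕ, ∀ t ∈ Set.Icc ((2 * (n : ℝ) + 1) * T) ((2 * (n : ℝ) + 2) * T),
      pairNorm x 0 2 t
          ≤ ks * Real.exp (-(ls * (t - (2 * (n : ℝ) + 1) * T)))
            * pairNorm x 0 2 ((2 * (n : ℝ) + 1) * T) ∧
      singleNorm x 1 t
          ≤ ku * Real.exp (lu * (t - (2 * (n : ℝ) + 1) * T))
            * singleNorm x 1 ((2 * (n : ℝ) + 1) * T)) :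
    ∀ n : ℕ,
      fullNorm x ((2 * (n : ℝ)) * T)
        ≤ Real.exp (-(2 * lb * (n : ℝ) * T)) * fullNorm x 0 := by
  have hc1 : 0 < ls - lu - 2 * lb := by linarith
  have hT1 : Real.log (2 * ku * ks) / (ls - lu - 2 * lb) ≤ T :=
    le_trans (le_max_left _ _) hT
  have hT2 : Real.log (2 * ks ^ 2) / (2 * (ls - lb)) ≤ T :=
    le_trans (le_max_right _ _) hT
  have hT0 : 0 ≤ T := by
    refine le_trans (div_nonneg (Real.log_nonneg ?_) hc1.le) hT1
    nlinarith
  set E := Real.exp (-(ls * T)) with hE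
  set F := Real.exp (lu * T) with hF
  set G := Real.exp (-(2 * lb * T)) with hG
  have hGsq : ks ^ 4 * E ^ 4 + 2 * ks ^ 2 * ku ^ 2 * E ^ 2 * F ^ 2 ≤ G ^ 2 :=
    scalar_ineq ks ku ls lu lb T hks hku hlu hls hlb0 hlb hT1 hT2
  have nnp : ∀ (i j : Fin 3) t, 0 ≤ pairNorm x i j t := fun i j t => Real.sqrt_nonneg _
  have nns : ∀ (i : Fin 3) t, 0 ≤ singleNorm x i t := fun i t => Real.sqrt_nonneg _
  have nnf : ∀ t, 0 ≤ fullNorm x t := fun t => Real.sqrt_nonneg _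
  have sqp : ∀ (i j : Fin 3) t, pairNorm x i j t ^ 2
      = (x t i) ^ 2 + (x t j) ^ 2 + (deriv x t i) ^ 2 + (deriv x t j) ^ 2 := by
    intro i j t; unfold pairNorm; exact Real.sq_sqrt (by positivity)
  have sqs : ∀ (i : Fin 3) t, singleNorm x i t ^ 2 = (x t i) ^ 2 + (deriv x t i) ^ 2 := by
    intro i t; unfold singleNorm; exact Real.sq_sqrt (by positivity)
  have sqf : ∀ t, fullNorm x t ^ 2 = (x t 0) ^ 2 + (x t 1) ^ 2 + (x t 2) ^ 2
      + (deriv x t 0) ^ 2 + (deriv x t 1) ^ 2 + (deriv x t 2) ^ 2 := by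
    intro t; unfold fullNorm; exact Real.sq_sqrt (by positivity)
  -- one-step contraction
  have key : ∀ n : ℕ, fullNorm x ((2 * (n : ℝ) + 2) * T)
      ≤ G * fullNorm x ((2 * (n : ℝ)) * T) := by
    intro n
    set t0 := (2 * (n : ℝ)) * T with ht0
    set t1 := (2 * (n : ℝ) + 1) * T with ht1
    set t2 := (2 * (n : ℝ) + 2) * T with ht2
    have m1 : t1 ∈ Set.Icc t0 t1 := ⟨by nlinarith, le_refl _⟩
    have m2 : t2 ∈ Set.Icc t1 t2 := ⟨by nlinarith, le_refl _⟩
    obtain ⟨hC, hD⟩ := heven n t1 m1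
    obtain ⟨hA, hB⟩ := hodd n t2 m2
    have d1 : t1 - t0 = T := by rw [ht0, ht1]; ring
    have d2 : t2 - t1 = T := by rw [ht1, ht2]; ring
    rw [d1] at hC hD
    rw [d2] at hA hB
    have i5 : pairNorm x 0 1 t0 ≤ fullNorm x t0 := by
      unfold pairNorm fullNorm
      apply Real.sqrt_le_sqrt
      linarith [sq_nonneg (x t0 2), sq_nonneg (deriv x t0 2)]
    have i6 : singleNorm x 2 t0 ≤ fullNorm x t0 := by
      unfold singleNorm fullNorm
      apply Real.sqrt_le_sqrt
      linarith [sq_nonneg (x t0 0), sq_nonneg (x t0 1), sq_nonneg (deriv x t0 0),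
        sq_nonneg (deriv x t0 1)]
    have hC' : pairNorm x 0 1 t1 ≤ ks * E * (fullNorm x t0) :=
      le_trans hC (mul_le_mul_of_nonneg_left i5 (by positivity))
    have hD' : singleNorm x 2 t1 ≤ ku * F * (fullNorm x t0) :=
      le_trans hD (mul_le_mul_of_nonneg_left i6 (by positivity))
    -- squared inequalities
    have q1 : pairNorm x 0 2 t2 ^ 2 ≤ (ks * E * pairNorm x 0 2 t1) ^ 2 :=
      pow_le_pow_left₀ (nnp 0 2 t2) hA 2
    have q2 : singleNorm x 1 t2 ^ 2 ≤ (ku * F * singleNorm x 1 t1) ^ 2 :=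
      pow_le_pow_left₀ (nns 1 t2) hB 2
    have q5 : pairNorm x 0 1 t1 ^ 2 ≤ (ks * E * (fullNorm x t0)) ^ 2 :=
      pow_le_pow_left₀ (nnp 0 1 t1) hC' 2
    have q6 : singleNorm x 2 t1 ^ 2 ≤ (ku * F * (fullNorm x t0)) ^ 2 :=
      pow_le_pow_left₀ (nns 2 t1) hD' 2
    have i3 : pairNorm x 0 2 t1 ^ 2 ≤ pairNorm x 0 1 t1 ^ 2 + singleNorm x 2 t1 ^ 2 := by
      rw [sqp 0 2 t1, sqp 0 1 t1, sqs 2 t1]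
      linarith [sq_nonneg (x t1 1), sq_nonneg (deriv x t1 1)]
    have i4 : singleNorm x 1 t1 ^ 2 ≤ pairNorm x 0 1 t1 ^ 2 := by
      rw [sqp 0 1 t1, sqs 1 t1]
      linarith [sq_nonneg (x t1 0), sq_nonneg (deriv x t1 0)]
    have e1 : fullNorm x t2 ^ 2 = pairNorm x 0 2 t2 ^ 2 + singleNorm x 1 t2 ^ 2 := by
      rw [sqf t2, sqp 0 2 t2, sqs 1 t2]; ring
    have hEpos : 0 < E := Real.exp_pos _
    have hFpos : 0 < F := Real.exp_pos _
    have hGpos : 0 < G := Real.exp_pos _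
    have q9 : (ks ^ 4 * E ^ 4 + 2 * ks ^ 2 * ku ^ 2 * E ^ 2 * F ^ 2) * (fullNorm x t0) ^ 2
        ≤ G ^ 2 * (fullNorm x t0) ^ 2 := mul_le_mul_of_nonneg_right hGsq (sq_nonneg _)
    have q3 : (ks * E) ^ 2 * pairNorm x 0 2 t1 ^ 2
        ≤ (ks * E) ^ 2 * (pairNorm x 0 1 t1 ^ 2 + singleNorm x 2 t1 ^ 2) :=
      mul_le_mul_of_nonneg_left i3 (by positivity)
    have q4 : (ku * F) ^ 2 * singleNorm x 1 t1 ^ 2 ≤ (ku * F) ^ 2 * pairNorm x 0 1 t1 ^ 2 :=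
      mul_le_mul_of_nonneg_left i4 (by positivity)
    have q7 : (ks * E) ^ 2 * (pairNorm x 0 1 t1 ^ 2 + singleNorm x 2 t1 ^ 2)
        ≤ (ks * E) ^ 2 * ((ks * E * (fullNorm x t0)) ^ 2 + (ku * F * (fullNorm x t0)) ^ 2) :=
      mul_le_mul_of_nonneg_left (by linarith) (by positivity)
    have q8 : (ku * F) ^ 2 * pairNorm x 0 1 t1 ^ 2 ≤ (ku * F) ^ 2 * (ks * E * (fullNorm x t0)) ^ 2 :=
      mul_le_mul_of_nonneg_left q5 (by positivity)
    have hsq : fullNorm x t2 ^ 2 ≤ (G * (fullNorm x t0)) ^ 2 := by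
      have expand1 : (ks * E * pairNorm x 0 2 t1) ^ 2 = (ks * E) ^ 2 * pairNorm x 0 2 t1 ^ 2 := by ring
      have expand2 : (ku * F * singleNorm x 1 t1) ^ 2 = (ku * F) ^ 2 * singleNorm x 1 t1 ^ 2 := by ring
      have expand3 : (ks * E) ^ 2 * ((ks * E * (fullNorm x t0)) ^ 2 + (ku * F * (fullNorm x t0)) ^ 2)
          + (ku * F) ^ 2 * (ks * E * (fullNorm x t0)) ^ 2
          = (ks ^ 4 * E ^ 4 + 2 * ks ^ 2 * ku ^ 2 * E ^ 2 * F ^ 2) * (fullNorm x t0) ^ 2 := by ring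
      have expand4 : G ^ 2 * (fullNorm x t0) ^ 2 = (G * (fullNorm x t0)) ^ 2 := by ring
      linarith [q1, q2, q3, q4, q7, q8, q9]
    have h0 : 0 ≤ G * (fullNorm x t0) := mul_nonneg hGpos.le (nnf t0)
    exact (pow_le_pow_iff_left₀ (nnf t2) h0 two_ne_zero).mp hsq
  intro n
  induction n with
  | zero =>
    simp
  | succ n ih =>
    have hk := key n
    have h2 : fullNorm x ((2 * (n : ℝ) + 2) * T) ≤ G * (Real.exp (-(2 * lb * (n : ℝ) * T)) * fullNorm x 0) :=
      le_trans hk (mul_le_mul_of_nonneg_left ih (Real.exp_pos _).le)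
    have harg : (2 * ((n : ℝ) + 1)) * T = (2 * (n : ℝ) + 2) * T := by ring
    have hexp : G * Real.exp (-(2 * lb * (n : ℝ) * T)) = Real.exp (-(2 * lb * ((n : ℝ) + 1) * T)) := by
      rw [hG, ← Real.exp_add]; congr 1; ring
    push_cast
    rw [harg]
    calc fullNorm x ((2 * (n : ℝ) + 2) * T)
        ≤ G * (Real.exp (-(2 * lb * (n : ℝ) * T)) * fullNorm x 0) := h2
      _ = Real.exp (-(2 * lb * ((n : ℝ) + 1) * T)) * fullNorm x 0 := by rw [← hexp]; ring
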